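/- Fix m ∈ ℕ and let ζ_n := (2(2m+3n)−1)!!/(6^{m+2n} (m+2n)!); ζ_n is the coefficient of ħⁿ in the m-th derivative with respect to the source j, evaluated at j = 0, of the partition function Z^{φ³}(ħ,j) of zero-dimensional φ³-theory with source, i.e. the generating sequence of the disconnected m-point functions of φ³-theory. Then ζ_n − (2^m/(2π)) · (3/2)^{n+m} · ( Γ(n+m) + (2/3)·(−5/24 + 3m/8 − m²/8)·Γ(n+m−1) ) = O( (3/2)ⁿ · Γ(n+m−2) ) as n → ∞. -/

import Mathlib

/-- `dfac m` is the odd double factorial `(2m-1)!! = (2m)!/(2^m m!)` as a real number. -/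
noncomputable def dfac (m : ℕ) : ℝ := ((2 * m).factorial : ℝ) / (2 ^ m * (m.factorial : ℝ))

/-- `ζ_n = (2(2m+3n)-1)!!/(6^{m+2n}(m+2n)!)`, the coefficient of `ħ^n` in the `m`-th
derivative at `j = 0` of the partition function of zero-dimensional φ³-theory with
source (the disconnected `m`-point functions). -/
noncomputable def zetaphi3 (m n : ℕ) : ℝ :=
  dfac (2 * m + 3 * n) / (6 ^ (m + 2 * n) * ((m + 2 * n).factorial : ℝ))

/-!
Stirling's formula with Robbins' error bound gives
`log k! = (k + 1/2) log k - k + log (2π) / 2 + 1/(12k) + O(1/k²)`. Applied to the factorials in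
`ζ_n = (4m+6n)! / (2^{2m+3n} (2m+3n)! 6^{m+2n} (m+2n)!)` and to `Γ(n+m) = (n+m)! / (n+m)`, it
gives `ζ_n = 2^m/(2π) (3/2)^{n+m} Γ(n+m) e^{L_n}` with `L_n = c/(n+m) + O(1/n²)`, where
`c = -5/36 + m/4 - m²/12` collects the `1/(12k)` terms and the second-order Taylor terms of
`log (1 - m/(3(n+m)))` and `log (1 - m/(2(n+m)))`. Hence `e^{L_n} = 1 + c/(n+m-1) + O(1/n²)`, and
`Γ(n+m) = (n+m-1)(n+m-2) Γ(n+m-2)` turns the error `O(1/n²)` into `O((3/2)^n Γ(n+m-2))`.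
-/

open Real Filter Topology Asymptotics Stirling
open scoped Nat

noncomputable def stirlingRem (k : ℕ) : ℝ :=
  log k ! - ((k + 1 / 2) * log k - k + log (2 * π) / 2)

lemma stirlingRem_eq_log_stirlingSeq_sub {k : ℕ} (hk : k ≠ 0) :
    stirlingRem k = log (stirlingSeq k) - log √π := by
  have hk' : (k : ℝ) ≠ 0 := Nat.cast_ne_zero.mpr hk
  rw [stirlingRem, log_stirlingSeq_formula, log_mul two_ne_zero hk', log_div hk' (exp_ne_zero 1),
    log_exp, log_sqrt pi_pos.le, log_mul two_ne_zero pi_ne_zero]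
  ring

lemma sub_le_of_tendsto_of_forall_sub_succ_le {f g : ℕ → ℝ} {l : ℝ}
    (hf : Tendsto f atTop (𝓝 l)) (hg : Tendsto g atTop (𝓝 0))
    (h : ∀ k, f k - f (k + 1) ≤ g k - g (k + 1)) (k : ℕ) : f k - g k ≤ l := by
  have hmono : Monotone (f - g) := monotone_nat_of_le_succ fun j => by
    simp only [Pi.sub_apply]; linarith [h j]
  simpa using hmono.ge_of_tendsto (hf.sub hg) k

lemma log_stirlingSeq_sdiff_ge (k : ℕ) :
    1 / (12 * (k + 1 : ℝ) + 1) - 1 / (12 * (k + 2 : ℝ) + 1) ≤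
      log (stirlingSeq (k + 1)) - log (stirlingSeq (k + 2)) := by
  refine le_trans ?_ (le_hasSum (log_stirlingSeq_sdiff_hasSum k) 0 fun j _ => by positivity)
  have hk : (0 : ℝ) ≤ k := k.cast_nonneg
  rw [div_sub_div _ _ (by positivity) (by positivity), div_le_iff₀ (by positivity)]
  push_cast
  field_simp
  nlinarith

lemma tendsto_log_stirlingSeq_succ :
    Tendsto (fun k : ℕ => log (stirlingSeq (k + 1))) atTop (𝓝 (log √π)) :=
  ((continuousAt_log (by positivity)).tendsto).comp
    (tendsto_stirlingSeq_sqrt_pi.comp (tendsto_add_atTop_nat 1))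

lemma tendsto_one_div_twelve_mul_add (a : ℝ) :
    Tendsto (fun k : ℕ => 1 / (12 * (k + 1 : ℝ) + a)) atTop (𝓝 0) := by
  refine tendsto_const_nhds.div_atTop (tendsto_atTop_add_const_right _ _ ?_)
  exact (tendsto_natCast_atTop_atTop.atTop_add tendsto_const_nhds).const_mul_atTop (by norm_num)

lemma stirlingRem_le_one_div {k : ℕ} (hk : k ≠ 0) : stirlingRem k ≤ 1 / (12 * k) := by
  obtain ⟨j, rfl⟩ := Nat.exists_eq_add_one_of_ne_zero hk
  have := sub_le_of_tendsto_of_forall_sub_succ_le tendsto_log_stirlingSeq_succ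
    (tendsto_one_div_twelve_mul_add 0) (fun i => ?_) j
  · rw [add_zero] at this
    rw [stirlingRem_eq_log_stirlingSeq_sub hk]
    push_cast
    linarith
  · have h := log_stirlingSeq_sdiff_le (i + 1)
    push_cast at h ⊢
    convert h using 1
    field_simp
    ring

lemma one_div_le_stirlingRem {k : ℕ} (hk : k ≠ 0) : 1 / (12 * k + 1) ≤ stirlingRem k := by
  obtain ⟨j, rfl⟩ := Nat.exists_eq_add_one_of_ne_zero hk
  have := sub_le_of_tendsto_of_forall_sub_succ_le tendsto_log_stirlingSeq_succ.neg
    (by simpa using (tendsto_one_div_twelve_mul_add 1).neg) (fun i => ?_) j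
  · rw [stirlingRem_eq_log_stirlingSeq_sub hk]
    push_cast
    simp only [one_div] at this ⊢
    linarith
  · have h := log_stirlingSeq_sdiff_ge i
    push_cast at h ⊢
    ring_nf at h ⊢
    linarith

lemma abs_stirlingRem_sub_le {k : ℕ} (hk : k ≠ 0) :
    |stirlingRem k - 1 / (12 * k)| ≤ 1 / (144 * k ^ 2) := by
  have hk' : (1 : ℝ) ≤ k := by exact_mod_cast Nat.one_le_iff_ne_zero.mpr hk
  have hgap : 1 / (12 * k) - 1 / (12 * k + 1) ≤ 1 / (144 * (k : ℝ) ^ 2) := by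
    rw [div_sub_div _ _ (by positivity) (by positivity),
      div_le_div_iff₀ (by positivity) (by positivity)]
    nlinarith
  rw [abs_sub_comm, abs_of_nonneg (sub_nonneg.mpr (stirlingRem_le_one_div hk))]
  linarith [one_div_le_stirlingRem hk]

lemma abs_log_one_sub_add_le {s : ℝ} (h0 : 0 ≤ s) (h1 : s ≤ 1 / 2) :
    |log (1 - s) + s + s ^ 2 / 2| ≤ 2 * s ^ 3 := by
  have h := abs_log_sub_add_sum_range_le (x := s) (by rw [abs_of_nonneg h0]; linarith) 2
  norm_num [Finset.sum_range_succ, abs_of_nonneg h0] at h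
  calc |log (1 - s) + s + s ^ 2 / 2| = |s + s ^ 2 / 2 + log (1 - s)| := by ring_nf
    _ ≤ s ^ 3 / (1 - s) := h
    _ ≤ 2 * s ^ 3 := by
      rw [div_le_iff₀ (by linarith)]
      nlinarith [pow_nonneg h0 3]

lemma abs_mul_log_sub_div_sub_le {y M β : ℝ} (hM : 0 ≤ M) (hMy : 2 * M ≤ y) (hy : 1 ≤ y)
    (hβ0 : 0 ≤ β) (hβ1 : β ≤ 1) :
    |(y - M + β) * log ((y - M) / y) + M - (M ^ 2 / 2 - β * M) / y| ≤
      (5 * M ^ 3 + M ^ 2) / y ^ 2 := by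
  have hy0 : 0 < y := by linarith
  set s := M / y with hs
  have hs0 : 0 ≤ s := by positivity
  have hs1 : s ≤ 1 / 2 := by rw [hs, div_le_iff₀ hy0]; linarith
  have hsplit : (y - M + β) * log ((y - M) / y) + M - (M ^ 2 / 2 - β * M) / y =
      (y - M + β) * (log (1 - s) + s + s ^ 2 / 2) + (M ^ 3 - β * M ^ 2) / (2 * y ^ 2) := by
    rw [hs, one_sub_div hy0.ne']
    field_simp
    ring
  have htaylor : |(y - M + β) * (log (1 - s) + s + s ^ 2 / 2)| ≤ 4 * M ^ 3 / y ^ 2 := by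
    rw [abs_mul, abs_of_nonneg (by linarith)]
    calc (y - M + β) * |log (1 - s) + s + s ^ 2 / 2| ≤ (2 * y) * (2 * s ^ 3) := by
          gcongr
          · linarith
          · exact abs_log_one_sub_add_le hs0 hs1
      _ = 4 * M ^ 3 / y ^ 2 := by rw [hs]; field_simp; ring
  have hcubic : |(M ^ 3 - β * M ^ 2) / (2 * y ^ 2)| ≤ (M ^ 3 + M ^ 2) / (2 * y ^ 2) := by
    rw [abs_div, abs_of_pos (by positivity : (0 : ℝ) < 2 * y ^ 2)]
    refine div_le_div_of_nonneg_right (abs_le.mpr ⟨?_, ?_⟩) (by positivity) <;>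
      nlinarith [pow_nonneg hM 3, sq_nonneg M, mul_nonneg hβ0 (sq_nonneg M)]
  rw [hsplit]
  calc _ ≤ 4 * M ^ 3 / y ^ 2 + (M ^ 3 + M ^ 2) / (2 * y ^ 2) :=
        (abs_add_le _ _).trans (add_le_add htaylor hcubic)
    _ ≤ (5 * M ^ 3 + M ^ 2) / y ^ 2 := by
      rw [div_add_div _ _ (by positivity) (by positivity),
        div_le_div_iff₀ (by positivity) (by positivity)]
      nlinarith [pow_nonneg hM 3, sq_nonneg M, pow_pos hy0 4]

lemma abs_sum_one_div_twelve_mul_le {X M : ℝ} (hM : 0 ≤ M) (hMX : M ≤ X) (hX : 0 < X) :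
    |1 / (12 * (2 * (3 * X - M))) - 1 / (12 * (3 * X - M)) - 1 / (12 * (2 * X - M))
      - 1 / (12 * X) + 5 / 36 / X| ≤ M / (18 * X ^ 2) := by
  have ha : 0 < 3 * X - M := by linarith
  have hb : 0 < 2 * X - M := by linarith
  have hsum : 1 / (12 * (2 * (3 * X - M))) - 1 / (12 * (3 * X - M)) - 1 / (12 * (2 * X - M))
      - 1 / (12 * X) + 5 / 36 / X = -(M / (72 * X * (3 * X - M)) + M / (24 * X * (2 * X - M))) := by
    field_simp
    ring
  rw [hsum, abs_neg, abs_of_nonneg (by positivity)]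
  calc _ ≤ M / (72 * X * X) + M / (24 * X * X) := by
        gcongr M / (_ * ?_) + M / (_ * ?_) <;> linarith
    _ = M / (18 * X ^ 2) := by field_simp; ring

lemma abs_log_combination_sub_le {X M : ℝ} (hM : 0 ≤ M) (hMX : M ≤ X) (hX : 1 ≤ X) :
    |(3 * X - M) * log ((3 * X - M) / (3 * X))
      - (2 * X - M + 1 / 2) * log ((2 * X - M) / (2 * X)) - (M / 4 - M ^ 2 / 12) / X| ≤
      (5 * M ^ 3 + M ^ 2) / (2 * X ^ 2) := by
  have g₁ := abs_mul_log_sub_div_sub_le (y := 3 * X) (β := 0) hM (by linarith) (by linarith)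
    le_rfl zero_le_one
  have g₂ := abs_mul_log_sub_div_sub_le (y := 2 * X) (β := 1 / 2) hM (by linarith) (by linarith)
    (by norm_num) (by norm_num)
  simp only [add_zero, zero_mul, sub_zero] at g₁
  have hX0 : X ≠ 0 := by positivity
  have hsplit : (3 * X - M) * log ((3 * X - M) / (3 * X))
      - (2 * X - M + 1 / 2) * log ((2 * X - M) / (2 * X)) - (M / 4 - M ^ 2 / 12) / X =
      ((3 * X - M) * log ((3 * X - M) / (3 * X)) + M - M ^ 2 / 2 / (3 * X))
      - ((2 * X - M + 1 / 2) * log ((2 * X - M) / (2 * X)) + M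
        - (M ^ 2 / 2 - 1 / 2 * M) / (2 * X)) := by
    field_simp
    ring
  have hconst : (5 * M ^ 3 + M ^ 2) / (3 * X) ^ 2 + (5 * M ^ 3 + M ^ 2) / (2 * X) ^ 2 ≤
      (5 * M ^ 3 + M ^ 2) / (2 * X ^ 2) := by
    have hK : 0 ≤ (5 * M ^ 3 + M ^ 2) / X ^ 2 := by positivity
    calc _ = 13 / 36 * ((5 * M ^ 3 + M ^ 2) / X ^ 2) := by ring
      _ ≤ 1 / 2 * ((5 * M ^ 3 + M ^ 2) / X ^ 2) :=
        mul_le_mul_of_nonneg_right (by norm_num) hK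
      _ = _ := by ring
  rw [hsplit]
  exact (abs_sub _ _).trans ((add_le_add g₁ g₂).trans hconst)

section Asymptotics

variable {α : Type*} {l : Filter α} {x : α → ℝ}

lemma isBigO_inv_sq_inv (hx : Tendsto x l atTop) :
    (fun a => (x a ^ 2)⁻¹) =O[l] fun a => (x a)⁻¹ := by
  refine IsBigO.of_bound 1 ?_
  filter_upwards [hx.eventually_ge_atTop 1] with a ha
  rw [one_mul, norm_inv, norm_inv, norm_pow, Real.norm_eq_abs, abs_of_pos (by linarith)]
  exact inv_anti₀ (by linarith) (by nlinarith)

lemma isBigO_div_sub_div_sub_one (c : ℝ) (hx : Tendsto x l atTop) :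
    (fun a => c / x a - c / (x a - 1)) =O[l] fun a => (x a ^ 2)⁻¹ := by
  refine IsBigO.of_bound (2 * |c|) ?_
  filter_upwards [hx.eventually_ge_atTop 2] with a ha
  have hpos : 0 < x a := by linarith
  have hpos' : 0 < x a - 1 := by linarith
  calc ‖c / x a - c / (x a - 1)‖ = |c| / (x a * (x a - 1)) := by
        rw [show c / x a - c / (x a - 1) = -c / (x a * (x a - 1)) by field_simp; ring,
          Real.norm_eq_abs, abs_div, abs_neg, abs_of_pos (mul_pos hpos hpos')]
    _ ≤ |c| / (x a ^ 2 / 2) := by gcongr; nlinarith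
    _ = 2 * |c| * ‖(x a ^ 2)⁻¹‖ := by
        rw [norm_inv, norm_pow, Real.norm_eq_abs, abs_of_pos hpos]
        field_simp

lemma isBigO_exp_sub_one_sub {f : α → ℝ} (hf : Tendsto f l (𝓝 0)) :
    (fun a => exp (f a) - 1 - f a) =O[l] fun a => f a ^ 2 := by
  refine IsBigO.of_bound 1 ?_
  filter_upwards [hf.eventually (Metric.closedBall_mem_nhds 0 one_pos)] with a ha
  rw [one_mul, Real.norm_eq_abs, norm_pow, Real.norm_eq_abs, sq_abs]
  exact abs_exp_sub_one_sub_id_le (by simpa using ha)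

lemma isBigO_exp_sub_one_sub_div_sub_one {f : α → ℝ} (c : ℝ) (hx : Tendsto x l atTop)
    (hf : (fun a => f a - c / x a) =O[l] fun a => (x a ^ 2)⁻¹) :
    (fun a => exp (f a) - 1 - c / (x a - 1)) =O[l] fun a => (x a ^ 2)⁻¹ := by
  have hf₁ : f =O[l] fun a => (x a)⁻¹ := by
    have := (hf.trans (isBigO_inv_sq_inv hx)).add
      ((isBigO_refl (fun a => (x a)⁻¹) l).const_mul_left c)
    simpa [div_eq_mul_inv] using this
  have hf₀ : Tendsto f l (𝓝 0) := hf₁.trans_tendsto (tendsto_inv_atTop_zero.comp hx)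
  have hsq : (fun a => f a ^ 2) =O[l] fun a => (x a ^ 2)⁻¹ :=
    (hf₁.pow 2).congr_right fun a => inv_pow _ 2
  have := ((isBigO_exp_sub_one_sub hf₀).trans hsq).add (hf.add (isBigO_div_sub_div_sub_one c hx))
  exact this.congr_left fun a => by ring

lemma isBigO_sub_one_mul_sub_two_mul {f : α → ℝ} (hx : Tendsto x l atTop)
    (hf : f =O[l] fun a => (x a ^ 2)⁻¹) :
    (fun a => (x a - 1) * (x a - 2) * f a) =O[l] fun _ => (1 : ℝ) := by
  obtain ⟨C, hC⟩ := hf.bound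
  refine IsBigO.of_bound C ?_
  filter_upwards [hC, hx.eventually_ge_atTop 2] with a ha hxa
  have hpoly : |(x a - 1) * (x a - 2)| ≤ x a ^ 2 := by
    rw [abs_of_nonneg (by nlinarith)]; nlinarith
  rw [norm_one, mul_one, norm_mul, Real.norm_eq_abs]
  calc |(x a - 1) * (x a - 2)| * ‖f a‖ ≤ x a ^ 2 * (C * ‖(x a ^ 2)⁻¹‖) :=
        mul_le_mul hpoly ha (norm_nonneg _) (by positivity)
    _ = C := by
        rw [norm_inv, norm_pow, Real.norm_eq_abs, abs_of_pos (by linarith)]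
        field_simp

end Asymptotics

noncomputable def phi3Corr (m n : ℕ) : ℝ :=
  stirlingRem (2 * (2 * m + 3 * n)) - stirlingRem (2 * m + 3 * n) - stirlingRem (m + 2 * n)
    - stirlingRem (n + m)
    + (2 * m + 3 * n : ℝ) * log ((2 * m + 3 * n) / (3 * (n + m)))
    - (m + 2 * n + 1 / 2 : ℝ) * log ((m + 2 * n) / (2 * (n + m)))

lemma zetaphi3_eq {m n : ℕ} (hnm : n + m ≠ 0) :
    zetaphi3 m n =
      2 ^ m / (2 * π) * (3 / 2) ^ (n + m) * Gamma (n + m) * exp (phi3Corr m n) := by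
  have hX : (0 : ℝ) < n + m := by exact_mod_cast Nat.pos_of_ne_zero hnm
  have ha : (0 : ℝ) < 2 * m + 3 * n := by linarith
  have hb : (0 : ℝ) < m + 2 * n := by linarith
  have hGamma : Gamma (n + m) = (n + m)! / (n + m : ℝ) := by
    rw [eq_div_iff hX.ne', mul_comm, ← Gamma_add_one hX.ne']
    exact_mod_cast Gamma_nat_eq_factorial (n + m)
  have hlog_fac (k : ℕ) :
      log k ! = (k + 1 / 2) * log k - k + log (2 * π) / 2 + stirlingRem k := by
    rw [stirlingRem]; ring
  have hlog6 : log 6 = log 2 + log 3 := by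
    rw [← log_mul two_ne_zero three_ne_zero]; norm_num
  refine log_injOn_pos (Set.mem_Ioi.mpr (by unfold zetaphi3 dfac; positivity))
    (Set.mem_Ioi.mpr (by rw [hGamma]; positivity)) ?_
  rw [zetaphi3, dfac, hGamma, phi3Corr]
  rw [log_div (by positivity) (by positivity), log_div (by positivity) (by positivity),
    log_mul (by positivity) (by positivity), log_mul (by positivity) (by positivity),
    log_mul (by positivity) (by positivity), log_mul (by positivity) (by positivity),
    log_mul (by positivity) (by positivity), log_div (by positivity) (by positivity),
    log_div (by positivity) (by positivity), log_exp, log_pow, log_pow, log_pow,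
    hlog_fac, hlog_fac, hlog_fac, hlog_fac]
  push_cast
  rw [log_pow, log_div three_ne_zero two_ne_zero, log_mul two_ne_zero ha.ne', hlog6,
    log_div ha.ne' (by positivity), log_div hb.ne' (by positivity),
    log_mul three_ne_zero hX.ne', log_mul two_ne_zero hX.ne']
  push_cast
  ring

lemma abs_stirlingRem_combination_add_le {m n : ℕ} (hnm : n + m ≠ 0) :
    |stirlingRem (2 * (2 * m + 3 * n)) - stirlingRem (2 * m + 3 * n) - stirlingRem (m + 2 * n)
      - stirlingRem (n + m) + 5 / 36 / (n + m)| ≤ (1 + 2 * m) / (36 * (n + m : ℝ) ^ 2) := by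
  have hX : (1 : ℝ) ≤ n + m := by exact_mod_cast Nat.one_le_iff_ne_zero.mpr hnm
  have hM : (0 : ℝ) ≤ m := m.cast_nonneg
  have hN : (0 : ℝ) ≤ n := n.cast_nonneg
  have hrem (k : ℕ) (hk : (n + m : ℝ) ≤ k) :
      |stirlingRem k - 1 / (12 * k)| ≤ 1 / (144 * (n + m : ℝ) ^ 2) := by
    have hk0 : k ≠ 0 := by rintro rfl; push_cast at hk; linarith
    exact (abs_stirlingRem_sub_le hk0).trans (by gcongr)
  have r₁ := hrem (2 * (2 * m + 3 * n)) (by push_cast; linarith)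
  have r₂ := hrem (2 * m + 3 * n) (by push_cast; linarith)
  have r₃ := hrem (m + 2 * n) (by push_cast; linarith)
  have r₄ := hrem (n + m) (by push_cast; linarith)
  have hlead := abs_sum_one_div_twelve_mul_le hM (by linarith) (by linarith : (0 : ℝ) < n + m)
  rw [show (3 * (n + m) - m : ℝ) = 2 * m + 3 * n by ring,
    show (2 * (n + m) - m : ℝ) = m + 2 * n by ring] at hlead
  push_cast at r₁ r₂ r₃ r₄
  have hconst : 4 * (1 / (144 * (n + m : ℝ) ^ 2)) + m / (18 * (n + m : ℝ) ^ 2) =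
      (1 + 2 * m) / (36 * (n + m : ℝ) ^ 2) := by
    field_simp
    ring
  rw [abs_le] at r₁ r₂ r₃ r₄ hlead ⊢
  constructor <;>
    linarith [r₁.1, r₁.2, r₂.1, r₂.2, r₃.1, r₃.2, r₄.1, r₄.2, hlead.1, hlead.2]

lemma abs_phi3Corr_sub_le {m n : ℕ} (hnm : n + m ≠ 0) :
    |phi3Corr m n - (-5 / 36 + m / 4 - m ^ 2 / 12) / (n + m)| ≤
      3 * (1 + m : ℝ) ^ 3 / (n + m : ℝ) ^ 2 := by
  have hX : (1 : ℝ) ≤ n + m := by exact_mod_cast Nat.one_le_iff_ne_zero.mpr hnm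
  have hM : (0 : ℝ) ≤ m := m.cast_nonneg
  have hlog := abs_log_combination_sub_le hM (by linarith [n.cast_nonneg (α := ℝ)]) hX
  rw [show (3 * (n + m) - m : ℝ) = 2 * m + 3 * n by ring,
    show (2 * (n + m) - m : ℝ) = m + 2 * n by ring] at hlog
  have hsplit : phi3Corr m n - (-5 / 36 + m / 4 - m ^ 2 / 12) / (n + m) =
      (stirlingRem (2 * (2 * m + 3 * n)) - stirlingRem (2 * m + 3 * n) - stirlingRem (m + 2 * n)
        - stirlingRem (n + m) + 5 / 36 / (n + m))
      + ((2 * m + 3 * n) * log ((2 * m + 3 * n) / (3 * (n + m)))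
        - (m + 2 * n + 1 / 2) * log ((m + 2 * n) / (2 * (n + m)))
        - (m / 4 - m ^ 2 / 12) / (n + m)) := by
    rw [phi3Corr]
    ring
  have hconst : (1 + 2 * m) / (36 * (n + m : ℝ) ^ 2)
      + (5 * m ^ 3 + m ^ 2) / (2 * (n + m : ℝ) ^ 2) ≤
      3 * (1 + m : ℝ) ^ 3 / (n + m : ℝ) ^ 2 := by
    rw [div_add_div _ _ (by positivity) (by positivity),
      div_le_div_iff₀ (by positivity) (by positivity)]
    nlinarith [pow_nonneg hM 3, sq_nonneg (m : ℝ), pow_pos (by linarith : (0 : ℝ) < n + m) 4]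
  rw [hsplit]
  exact (abs_add_le _ _).trans
    ((add_le_add (abs_stirlingRem_combination_add_le hnm) hlog).trans hconst)

lemma isBigO_phi3Corr_sub (m : ℕ) :
    (fun n : ℕ => phi3Corr m n - (-5 / 36 + m / 4 - m ^ 2 / 12) / (n + m))
      =O[atTop] fun n : ℕ => ((n + m : ℝ) ^ 2)⁻¹ := by
  refine IsBigO.of_bound (3 * (1 + m) ^ 3) ?_
  filter_upwards [eventually_ge_atTop 1] with n hn
  have hpos : (0 : ℝ) < n + m := by
    have : (1 : ℝ) ≤ n := by exact_mod_cast hn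
    linarith [m.cast_nonneg (α := ℝ)]
  simp only [norm_inv, norm_pow, Real.norm_eq_abs, abs_of_pos hpos, ← div_eq_mul_inv]
  exact abs_phi3Corr_sub_le (by omega)

lemma zetaphi3_sub_eq {m n : ℕ} (c : ℝ) (h : 3 ≤ n + m) :
    zetaphi3 m n - 2 ^ m / (2 * π) * (3 / 2) ^ (n + m) * (Gamma (n + m) + c * Gamma (n + m - 1)) =
      2 ^ m / (2 * π) * (3 / 2) ^ m * ((3 / 2) ^ n * Gamma (n + m - 2)) *
        ((n + m - 1) * (n + m - 2) * (exp (phi3Corr m n) - 1 - c / (n + m - 1))) := by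
  have hX : (3 : ℝ) ≤ n + m := by exact_mod_cast h
  have hG₁ : Gamma (n + m) = (n + m - 1) * Gamma (n + m - 1) := by
    rw [← Gamma_add_one (by linarith)]; ring_nf
  have hG₂ : Gamma (n + m - 1) = (n + m - 2) * Gamma (n + m - 2) := by
    rw [← Gamma_add_one (by linarith)]; ring_nf
  have : (n + m - 1 : ℝ) ≠ 0 := by linarith
  rw [zetaphi3_eq (by omega), hG₁, hG₂, pow_add]
  field_simp
  ring

/-- For fixed `m`,
`ζ_n - (2^m/(2π))(3/2)^{n+m}(Γ(n+m) + (2/3)(-5/24 + 3m/8 - m²/8)Γ(n+m-1))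
  = O((3/2)^n Γ(n+m-2))` as `n → ∞`. -/
theorem stmt13 (m : ℕ) :
    (fun n : ℕ => zetaphi3 m n -
        (2 : ℝ) ^ m / (2 * Real.pi) * (3 / 2 : ℝ) ^ (n + m) *
          (Real.Gamma ((n : ℝ) + (m : ℝ)) +
            2 / 3 * (-5 / 24 + 3 * (m : ℝ) / 8 - (m : ℝ) ^ 2 / 8) *
              Real.Gamma ((n : ℝ) + (m : ℝ) - 1)))
      =O[Filter.atTop] fun n : ℕ =>
        (3 / 2 : ℝ) ^ n * Real.Gamma ((n : ℝ) + (m : ℝ) - 2) := by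
  set c : ℝ := -5 / 36 + m / 4 - m ^ 2 / 12
  have hc : 2 / 3 * (-5 / 24 + 3 * (m : ℝ) / 8 - (m : ℝ) ^ 2 / 8) = c := by ring
  have hx : Tendsto (fun n : ℕ => (n + m : ℝ)) atTop atTop :=
    tendsto_atTop_add_const_right _ _ tendsto_natCast_atTop_atTop
  have hbounded := isBigO_sub_one_mul_sub_two_mul hx
    (isBigO_exp_sub_one_sub_div_sub_one c hx (isBigO_phi3Corr_sub m))
  have key := ((isBigO_refl (fun n : ℕ => (3 / 2 : ℝ) ^ n * Gamma (n + m - 2)) atTop).mul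
    hbounded).const_mul_left (2 ^ m / (2 * π) * (3 / 2) ^ m)
  rw [hc]
  refine key.congr' ?_ (Eventually.of_forall fun n => mul_one _)
  filter_upwards [eventually_ge_atTop 3] with n hn
  rw [zetaphi3_sub_eq c (by omega)]
  ring
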